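/- Let F be a strictly increasing continuous distribution function on ℝ and p the Borel probability measure it defines. Then the set D_F ⊆ ℝ^ℕ of all p-equidistributed sequences is a Borel set with p^ℕ(D_F) = 1. -/

import Mathlib

open MeasureTheory Filter

/-- Extension of a distribution function `F` to `EReal`, with value `0` at `-∞`
and `1` at `+∞`. -/
noncomputable def cdfExt (F : ℝ → ℝ) : EReal → ℝ := fun a =>
  if a = ⊥ then 0 else if a = ⊤ then 1 else F a.toReal

/-- A sequence `(xₖ)` of reals is `p`-equidistributed (for the measure `p` with
distribution function `F`) if for every interval `[a,b]` with endpoints possibly `±∞`,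
the asymptotic proportion of the first `n` terms lying in `[a,b]` is `F(b) - F(a)`. -/
noncomputable def IsEquidistributedWRT (F : ℝ → ℝ) (x : ℕ → ℝ) : Prop :=
  ∀ a b : EReal, a ≤ b →
    Tendsto (fun n : ℕ =>
        (((Finset.range n).filter
            (fun k => a ≤ (x k : EReal) ∧ (x k : EReal) ≤ b)).card : ℝ) / n)
      atTop (nhds (cdfExt F b - cdfExt F a))

/-- `ν` is the countable power `p^ℕ` of `p`. -/
def IsInfinitePower {X : Type*} [MeasurableSpace X] (μ : Measure X)
    (ν : Measure (ℕ → X)) : Prop :=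
  IsProbabilityMeasure ν ∧
    ∀ n : ℕ, ν.map (fun x (i : Fin n) => x (i : ℕ)) = Measure.pi (fun _ : Fin n => μ)

/-!
By the strong law of large numbers for the indicator of `(-∞, q]`, almost every sequence has
empirical distribution function converging to `F q` at every rational `q`. The empirical
distribution functions are monotone and `F` is continuous, so convergence at the rationals
already gives the right limit on every interval with extended-real endpoints. Hence the set of
equidistributed sequences is a countable intersection of measurable sets of full measure.
-/

open Set Topology ProbabilityTheory

@[simp] lemma cdfExt_bot (F : ℝ → ℝ) : cdfExt F ⊥ = 0 := by simp [cdfExt]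

@[simp] lemma cdfExt_top (F : ℝ → ℝ) : cdfExt F ⊤ = 1 := by simp [cdfExt]

@[simp] lemma cdfExt_coe (F : ℝ → ℝ) (t : ℝ) : cdfExt F t = F t := by simp [cdfExt]

noncomputable def empiricalFreq {α : Type*} (x : ℕ → α) (s : Set α) (n : ℕ) : ℝ :=
  (∑ k ∈ Finset.range n, s.indicator 1 (x k)) / n

section empiricalFreq

variable {α : Type*} {x : ℕ → α} {s t : Set α} {n : ℕ}

lemma card_filter_div_eq_empiricalFreq (P : α → Prop) [DecidablePred P] :
    (((Finset.range n).filter fun k => P (x k)).card : ℝ) / n = empiricalFreq x {y | P y} n := by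
  simp [empiricalFreq, Set.indicator_apply, Finset.sum_boole]

lemma empiricalFreq_mono (hst : s ⊆ t) : empiricalFreq x s n ≤ empiricalFreq x t n := by
  unfold empiricalFreq
  gcongr with k
  exact zero_le_one

lemma empiricalFreq_sdiff (hts : t ⊆ s) :
    empiricalFreq x (s \ t) n = empiricalFreq x s n - empiricalFreq x t n := by
  simp only [empiricalFreq, Set.indicator_sdiff hts, Pi.sub_apply, Finset.sum_sub_distrib, sub_div]

lemma empiricalFreq_empty : empiricalFreq x ∅ = 0 := by
  ext n
  simp [empiricalFreq]

lemma tendsto_empiricalFreq_univ : Tendsto (empiricalFreq x univ) atTop (𝓝 1) := by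
  refine tendsto_const_nhds.congr' ?_
  filter_upwards [eventually_ne_atTop 0] with n hn
  simp [empiricalFreq, hn]

end empiricalFreq

section equidistribution

variable {F : ℝ → ℝ} {x : ℕ → ℝ} {s : Set ℝ}

/-- Squeeze between `Iic q ⊆ s ⊆ Iic q'` for rationals `q < t < q'` with `F q`, `F q'`
near `F t`. -/
lemma tendsto_empiricalFreq_of_Iio_subset_of_subset_Iic {t : ℝ} (hF : ContinuousAt F t)
    (H : ∀ q : ℚ, Tendsto (empiricalFreq x (Iic q)) atTop (𝓝 (F q)))
    (hts : Iio t ⊆ s) (hst : s ⊆ Iic t) :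
    Tendsto (empiricalFreq x s) atTop (𝓝 (F t)) := by
  refine tendsto_order.2 ⟨fun a ha => ?_, fun b hb => ?_⟩
  · obtain ⟨δ, hδ, hFδ⟩ := Metric.eventually_nhds_iff.1 (hF.eventually (lt_mem_nhds ha))
    obtain ⟨q, hq, hqt⟩ := exists_rat_btwn (sub_lt_self t hδ)
    have hFq : a < F q := hFδ (by rw [Real.dist_eq, abs_sub_lt_iff]; constructor <;> linarith)
    filter_upwards [(H q).eventually (lt_mem_nhds hFq)] with n hn
    exact hn.trans_le (empiricalFreq_mono ((Iic_subset_Iio.2 hqt).trans hts))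
  · obtain ⟨δ, hδ, hFδ⟩ := Metric.eventually_nhds_iff.1 (hF.eventually (gt_mem_nhds hb))
    obtain ⟨q, htq, hq⟩ := exists_rat_btwn (lt_add_of_pos_right t hδ)
    have hFq : F q < b := hFδ (by rw [Real.dist_eq, abs_sub_lt_iff]; constructor <;> linarith)
    filter_upwards [(H q).eventually (gt_mem_nhds hFq)] with n hn
    exact (empiricalFreq_mono (hst.trans (Iic_subset_Iic.2 htq.le))).trans_lt hn

lemma tendsto_empiricalFreq_cdfExt (hF : Continuous F)
    (H : ∀ q : ℚ, Tendsto (empiricalFreq x (Iic q)) atTop (𝓝 (F q))) {b : EReal}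
    (hbs : {y : ℝ | (y : EReal) < b} ⊆ s) (hsb : s ⊆ {y : ℝ | (y : EReal) ≤ b}) :
    Tendsto (empiricalFreq x s) atTop (𝓝 (cdfExt F b)) := by
  induction b using EReal.rec with
  | bot =>
    have hs : s = ∅ := Set.subset_empty_iff.1 fun y hy => by simpa using hsb hy
    rw [hs, empiricalFreq_empty, cdfExt_bot]
    exact tendsto_const_nhds
  | coe t =>
    rw [cdfExt_coe]
    exact tendsto_empiricalFreq_of_Iio_subset_of_subset_Iic hF.continuousAt H
      (fun y hy => hbs (by simpa using hy)) (fun y hy => by simpa using hsb hy)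
  | top =>
    have hs : s = univ := Set.eq_univ_of_forall fun y => hbs (EReal.coe_lt_top y)
    rw [hs, cdfExt_top]
    exact tendsto_empiricalFreq_univ

/-- Via `[a, b] = {· ≤ b} \ {· < a}`. -/
theorem isEquidistributedWRT_iff (hF : Continuous F) :
    IsEquidistributedWRT F x ↔
      ∀ q : ℚ, Tendsto (empiricalFreq x (Iic q)) atTop (𝓝 (F q)) := by
  have hcard (a b : EReal) (n : ℕ) := card_filter_div_eq_empiricalFreq (x := x) (n := n)
    (fun y : ℝ => a ≤ (y : EReal) ∧ (y : EReal) ≤ b)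
  simp only [IsEquidistributedWRT, hcard]
  refine ⟨fun h q => ?_, fun H a b hab => ?_⟩
  · simpa [Set.Iic] using h ⊥ (q : ℝ) bot_le
  · have hsub : {y : ℝ | (y : EReal) < a} ⊆ {y : ℝ | (y : EReal) ≤ b} :=
      ofPred_subset_ofPred.2 fun _ hy => hy.le.trans hab
    have hIcc : {y : ℝ | a ≤ y ∧ (y : EReal) ≤ b} =
        {y : ℝ | (y : EReal) ≤ b} \ {y : ℝ | (y : EReal) < a} := by
      ext y; simp [and_comm]
    simp_rw [hIcc, empiricalFreq_sdiff hsub]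
    have hlt {c : EReal} : {y : ℝ | (y : EReal) < c} ⊆ {y : ℝ | (y : EReal) ≤ c} :=
      ofPred_subset_ofPred.2 fun _ => le_of_lt
    exact (tendsto_empiricalFreq_cdfExt hF H hlt subset_rfl).sub
      (tendsto_empiricalFreq_cdfExt hF H subset_rfl hlt)

end equidistribution

section infinitePi

variable {X : Type*} [MeasurableSpace X] {μ : Measure X} [IsProbabilityMeasure μ]

theorem IsInfinitePower.eq_infinitePi {ν : Measure (ℕ → X)} (hν : IsInfinitePower μ ν) :
    ν = Measure.infinitePi (fun _ => μ) := by
  refine Measure.eq_infinitePi _ fun s t ht => ?_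
  obtain ⟨n, hsn⟩ : ∃ n, s ⊆ Finset.range n := ⟨s.sup id + 1, fun i hi =>
    Finset.mem_range.2 (Nat.lt_succ_of_le (Finset.le_sup (f := id) hi))⟩
  classical
  have hpi : (s : Set ℕ).pi t = (fun x (i : Fin n) => x (i : ℕ)) ⁻¹'
      univ.pi (fun i : Fin n => if (i : ℕ) ∈ s then t i else univ) := by
    ext x
    simp only [Set.mem_pi, Finset.mem_coe, mem_preimage, mem_univ, true_implies]
    refine ⟨fun h i => ?_, fun h i hi => ?_⟩
    · split_ifs with hi
      · exact h i hi
      · trivial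
    · simpa [hi] using h ⟨i, Finset.mem_range.1 (hsn hi)⟩
  rw [hpi, ← Measure.map_apply (by fun_prop) (.univ_pi fun i => by split_ifs <;> simp [ht]),
    hν.2, Measure.pi_pi,
    Fin.prod_univ_eq_prod_range (fun i => μ (if i ∈ s then t i else _)),
    ← Finset.prod_subset hsn (fun i _ hi => by simp [hi])]
  exact Finset.prod_congr rfl fun i hi => by simp [hi]

theorem ae_tendsto_average_infinitePi {g : X → ℝ} (hg : Measurable g) (hint : Integrable g μ) :
    ∀ᵐ x ∂Measure.infinitePi (fun _ : ℕ => μ),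
      Tendsto (fun n : ℕ => (∑ i ∈ Finset.range n, g (x i)) / n) atTop (𝓝 (∫ y, g y ∂μ)) := by
  set P := Measure.infinitePi fun _ : ℕ => μ
  have heval (i : ℕ) : MeasurePreserving (fun x : ℕ → X => x i) P μ :=
    measurePreserving_eval_infinitePi _ i
  have hindep : iIndepFun (fun i (x : ℕ → X) => g (x i)) P :=
    iIndepFun_infinitePi (X := fun _ => g) fun _ => hg
  have hident (i : ℕ) : IdentDistrib (fun x : ℕ → X => g (x i)) (fun x => g (x 0)) P P :=
    IdentDistrib.comp ⟨(heval i).aemeasurable, (heval 0).aemeasurable,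
      (heval i).map_eq.trans (heval 0).map_eq.symm⟩ hg
  have h := strong_law_ae_real _ ((heval 0).integrable_comp_of_integrable hint)
    (fun i j hij => hindep.indepFun hij) hident
  rwa [← (heval 0).map_eq, integral_map (heval 0).aemeasurable hg.aestronglyMeasurable]

variable {s : Set X}

lemma measurable_empiricalFreq (hs : MeasurableSet s) (n : ℕ) :
    Measurable fun x : ℕ → X => empiricalFreq x s n :=
  (Finset.measurable_sum _ fun k _ =>
    (measurable_const.indicator hs).comp (measurable_pi_apply k)).div_const _

theorem ae_tendsto_empiricalFreq_infinitePi (hs : MeasurableSet s) :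
    ∀ᵐ x ∂Measure.infinitePi (fun _ : ℕ => μ),
      Tendsto (empiricalFreq x s) atTop (𝓝 (μ.real s)) := by
  have h := ae_tendsto_average_infinitePi (μ := μ) (g := s.indicator 1)
    (measurable_const.indicator hs) ((integrable_const (1 : ℝ)).indicator hs)
  rwa [integral_indicator_one hs] at h

end infinitePi

theorem isProbabilityMeasure_of_measure_Iic {p : Measure ℝ} {F : ℝ → ℝ}
    (hp : ∀ t, p (Iic t) = ENNReal.ofReal (F t)) (hF1 : Tendsto F atTop (𝓝 1)) :
    IsProbabilityMeasure p := by
  refine ⟨tendsto_nhds_unique (tendsto_measure_Iic_atTop p) ?_⟩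
  simpa [hp, Function.comp_def] using (ENNReal.continuous_ofReal.tendsto 1).comp hF1

/-- The set of `p`-equidistributed sequences is Borel and has full `p^ℕ`-measure. -/
theorem measurableSet_and_measure_equidistributedWRT_eq_one
    (F : ℝ → ℝ) (hFmono : StrictMono F) (hFcont : Continuous F)
    (hF0 : Tendsto F atBot (nhds 0)) (hF1 : Tendsto F atTop (nhds 1))
    (p : Measure ℝ) (hp : ∀ t, p (Set.Iic t) = ENNReal.ofReal (F t))
    (ν : Measure (ℕ → ℝ)) (hν : IsInfinitePower p ν) :
    MeasurableSet {x : ℕ → ℝ | IsEquidistributedWRT F x} ∧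
      ν {x : ℕ → ℝ | IsEquidistributedWRT F x} = 1 := by
  have := isProbabilityMeasure_of_measure_Iic hp hF1
  have hF_nonneg (t : ℝ) : 0 ≤ F t :=
    le_of_tendsto hF0 (eventually_atBot.2 ⟨t, fun _ hs => hFmono.monotone hs⟩)
  have hmeas : MeasurableSet {x : ℕ → ℝ | IsEquidistributedWRT F x} := by
    simp_rw [isEquidistributedWRT_iff hFcont, ofPred_forall]
    exact .iInter fun q => measurableSet_tendsto _ (measurable_empiricalFreq measurableSet_Iic)
  have hae : ∀ᵐ x ∂Measure.infinitePi (fun _ => p), IsEquidistributedWRT F x := by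
    simp_rw [isEquidistributedWRT_iff hFcont, ae_all_iff]
    intro q
    simpa [measureReal_def, hp, ENNReal.toReal_ofReal (hF_nonneg q)] using
      ae_tendsto_empiricalFreq_infinitePi (μ := p) (measurableSet_Iic (a := (q : ℝ)))
  refine ⟨hmeas, ?_⟩
  rw [hν.eq_infinitePi, (ae_iff_measure_eq hmeas.nullMeasurableSet).1 hae, measure_univ]
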